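/- arXiv:2304.01140 — 3 statements merged into one kernel-verified Lean document; each statement's English description precedes it below -/
import Mathlib

section
/- Let X be a real Banach space, let A : X → (X →L ℝ) be a twice continuously Fréchet differentiable map into the continuous dual of X (so that Ã(w)(φ) := (A w)(φ) is a semilinear form, linear in the test function φ), let F ∈ X →L ℝ be a continuous linear functional, and let J : X → ℝ be twice continuously Fréchet differentiable. Suppose u ∈ X solves the primal problem Ã(u)(φ) = F(φ) for all φ ∈ X, and z ∈ X solves the fine adjoint problem Ã'_u(u)(δu, z) = J'_u(u)(δu) for all δu ∈ X, where Ã'_u and J'_u denote Fréchet derivatives with respect to the first argument. Then for every ũ ∈ X, setting e := u − ũ, J(u) − J(ũ) = −Ã(ũ)(z) + F(z) + R, where the quadratic remainder is R = ∫_0^1 [ Ã''_{uu}(ũ + s e)(e, e, z) − J''_{uu}(ũ + s e)(e, e) ] · s ds. -/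
/-!
Along the segment `γ s = ũ + s • e` consider `g s = Ã(γ s)(z) - J(γ s)`. Integrating `s g''(s)`
by parts over `[0, 1]` gives `g'(1) - (g(1) - g(0))`. The primal equation turns `g(1)` into
`F(z) - J(u)`, and the adjoint equation says exactly that `g'(1) = 0`.
-/

open intervalIntegral

theorem integral_deriv_deriv_mul_id_eq {g g' g'' : ℝ → ℝ}
    (hg : ∀ s ∈ Set.uIcc (0 : ℝ) 1, HasDerivAt g (g' s) s)
    (hg' : ∀ s ∈ Set.uIcc (0 : ℝ) 1, HasDerivAt g' (g'' s) s)
    (hg'' : IntervalIntegrable g'' MeasureTheory.volume 0 1) :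
    ∫ s in (0 : ℝ)..1, g'' s * s = g' 1 - (g 1 - g 0) := by
  have hg'_cont : ContinuousOn g' (Set.uIcc 0 1) :=
    fun s hs => (hg' s hs).continuousAt.continuousWithinAt
  calc ∫ s in (0 : ℝ)..1, g'' s * s
      = ∫ s in (0 : ℝ)..1, s * g'' s := by simp only [mul_comm]
    _ = 1 * g' 1 - 0 * g' 0 - ∫ s in (0 : ℝ)..1, 1 * g' s :=
        integral_mul_deriv_eq_deriv_mul (fun s _ => hasDerivAt_id s) hg'
          intervalIntegrable_const hg''
    _ = g' 1 - (g 1 - g 0) := by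
        simp only [one_mul, zero_mul, sub_zero,
          integral_eq_sub_of_hasDerivAt hg hg'_cont.intervalIntegrable]

theorem HasDerivAt.clm_apply_const {F G : Type*} [NormedAddCommGroup F] [NormedSpace ℝ F]
    [NormedAddCommGroup G] [NormedSpace ℝ G] {c : ℝ → F →L[ℝ] G} {c' : F →L[ℝ] G} {s : ℝ}
    (hc : HasDerivAt c c' s) (y : F) : HasDerivAt (fun t => c t y) (c' y) s :=
  (ContinuousLinearMap.apply ℝ G y).hasFDerivAt.comp_hasDerivAt s hc

section LineRestriction

variable {X Y : Type*} [NormedAddCommGroup X] [NormedSpace ℝ X]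
  [NormedAddCommGroup Y] [NormedSpace ℝ Y] {f : X → Y}

theorem Differentiable.hasDerivAt_comp_add_smul (hf : Differentiable ℝ f) (x v : X) (s : ℝ) :
    HasDerivAt (fun t : ℝ => f (x + t • v)) (fderiv ℝ f (x + s • v) v) s := by
  simpa [Function.comp_def] using
    (hf _).hasFDerivAt.comp_hasDerivAt s (((hasDerivAt_id s).smul_const v).const_add x)

theorem ContDiff.hasDerivAt_fderiv_comp_add_smul (hf : ContDiff ℝ 2 f) (x v : X) (s : ℝ) :
    HasDerivAt (fun t : ℝ => fderiv ℝ f (x + t • v) v)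
      (fderiv ℝ (fderiv ℝ f) (x + s • v) v v) s :=
  ((hf.fderiv_right one_add_one_eq_two.le).differentiable one_ne_zero
    |>.hasDerivAt_comp_add_smul x v s).clm_apply_const v

theorem ContDiff.continuous_fderiv_fderiv_comp_add_smul (hf : ContDiff ℝ 2 f) (x v : X) :
    Continuous fun t : ℝ => fderiv ℝ (fderiv ℝ f) (x + t • v) v v :=
  (((hf.fderiv_right one_add_one_eq_two.le).continuous_fderiv one_ne_zero).comp
    (by fun_prop)).clm_apply continuous_const |>.clm_apply continuous_const

end LineRestriction

theorem dwr_error_representation_nonlinear_general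
    {X : Type*} [NormedAddCommGroup X] [NormedSpace ℝ X]
    (A : X → (X →L[ℝ] ℝ)) (hA : ContDiff ℝ 2 A)
    (F : X →L[ℝ] ℝ)
    (J : X → ℝ) (hJ : ContDiff ℝ 2 J)
    (u z : X)
    (hprimal : ∀ φ : X, A u φ = F φ)
    (hadjoint : ∀ δu : X, fderiv ℝ A u δu z = fderiv ℝ J u δu)
    (utilde : X) :
    J u - J utilde =
      -(A utilde z) + F z +
        ∫ s in (0:ℝ)..1,
          ((fderiv ℝ (fderiv ℝ A) (utilde + s • (u - utilde)))
              (u - utilde) (u - utilde) z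
            - (fderiv ℝ (fderiv ℝ J) (utilde + s • (u - utilde)))
                (u - utilde) (u - utilde)) * s := by
  have hg (s : ℝ) :=
    ((hA.differentiable two_ne_zero).hasDerivAt_comp_add_smul utilde (u - utilde) s
      |>.clm_apply_const z).sub
    ((hJ.differentiable two_ne_zero).hasDerivAt_comp_add_smul utilde (u - utilde) s)
  have hg' (s : ℝ) :=
    (hA.hasDerivAt_fderiv_comp_add_smul utilde (u - utilde) s |>.clm_apply_const z).sub
    (hJ.hasDerivAt_fderiv_comp_add_smul utilde (u - utilde) s)
  have hg'' :=
    (hA.continuous_fderiv_fderiv_comp_add_smul utilde (u - utilde)).clm_apply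
      (continuous_const (y := z)) |>.sub
    (hJ.continuous_fderiv_fderiv_comp_add_smul utilde (u - utilde))
  have key := integral_deriv_deriv_mul_id_eq (fun s _ => hg s) (fun s _ => hg' s)
    (hg''.intervalIntegrable 0 1)
  simp only [Pi.sub_apply, zero_smul, add_zero, one_smul, add_sub_cancel, hprimal, hadjoint,
    sub_self] at key
  rw [key]
  ring

/-- **Error representation for nonlinear problems.**
Let `X` be a real Banach space, `A : X → (X →L ℝ)` a `C²` map (so that
`Ã(w)(φ) := (A w)(φ)` is a semilinear form, linear in `φ`), `F` a continuous
linear functional and `J : X → ℝ` a `C²` goal functional. If `u` solves the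
primal problem `Ã(u)(φ) = F(φ)` for all `φ` and `z` solves the fine adjoint
problem `Ã'_u(u)(δu, z) = J'_u(u)(δu)` for all `δu`, then for every `ũ ∈ X`,
with `e := u − ũ`,
`J(u) − J(ũ) = −Ã(ũ)(z) + F(z) + R`, where
`R = ∫₀¹ [Ã''(ũ + s e)(e, e, z) − J''(ũ + s e)(e, e)] · s ds`. -/
theorem dwr_error_representation_nonlinear
    {X : Type*} [NormedAddCommGroup X] [NormedSpace ℝ X] [CompleteSpace X]
    (A : X → (X →L[ℝ] ℝ)) (hA : ContDiff ℝ 2 A)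
    (F : X →L[ℝ] ℝ)
    (J : X → ℝ) (hJ : ContDiff ℝ 2 J)
    (u z : X)
    (hprimal : ∀ φ : X, A u φ = F φ)
    (hadjoint : ∀ δu : X, fderiv ℝ A u δu z = fderiv ℝ J u δu)
    (utilde : X) :
    J u - J utilde =
      -(A utilde z) + F z +
        ∫ s in (0:ℝ)..1,
          ((fderiv ℝ (fderiv ℝ A) (utilde + s • (u - utilde)))
              (u - utilde) (u - utilde) z
            - (fderiv ℝ (fderiv ℝ J) (utilde + s • (u - utilde)))
                (u - utilde) (u - utilde)) * s :=
  dwr_error_representation_nonlinear_general A hA F J hJ u z hprimal hadjoint utilde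
end

section
/- Let Y ∈ ℝ^{n×m}, U ∈ ℝ^{n×N}, S ∈ ℝ^{N×N}, V ∈ ℝ^{m×N} with Y = U S Vᵀ, and let B ∈ ℝ^{n×b}. Let Q_B ∈ ℝ^{n×b} and R_B ∈ ℝ^{b×b} satisfy Q_B R_B = (I_n − U Uᵀ) B. Define the block matrix F = [ S , UᵀB ; 0 , R_B ] ∈ ℝ^{(N+b)×(N+b)}. Then the column-augmented matrix factorizes as [Y B] = [U Q_B] · F · ( blockdiag(V, I_b) )ᵀ, i.e., [Y B] = [U Q_B] F [ V , 0 ; 0 , I_b ]ᵀ. -/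
open Matrix

section BlockMultiplication

variable {R : Type*} [Ring R] {n m k l p : Type*} [Fintype k] [Fintype l]

theorem fromCols_mul_fromBlocks_zero_one [DecidableEq l] (A : Matrix n k R) (C : Matrix n l R)
    (W : Matrix k m R) :
    fromCols A C * fromBlocks W 0 0 (1 : Matrix l l R) = fromCols (A * W) C := by
  rw [fromCols_mul_fromBlocks]
  simp

theorem fromCols_mul_fromBlocks_zero (A : Matrix n k R) (C : Matrix n l R)
    (W : Matrix k m R) (X : Matrix k p R) (Z : Matrix l p R) :
    fromCols A C * fromBlocks W X 0 Z = fromCols (A * W) (A * X + C * Z) := by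
  rw [fromCols_mul_fromBlocks]
  simp

end BlockMultiplication

theorem mul_add_eq_of_mul_eq_one_sub_mul {R : Type*} [Ring R] {n k l : Type*} [Fintype n]
    [Fintype l] [DecidableEq n] (P : Matrix n n R) (Q : Matrix n l R) (Z : Matrix l k R)
    (B : Matrix n k R) (h : Q * Z = (1 - P) * B) :
    P * B + Q * Z = B := by
  rw [h, Matrix.sub_mul, Matrix.one_mul, add_sub_cancel]

/-- **Core factorization of the additive rank-b column update of the SVD.**
If `Y = U S Vᵀ`, `B` is a bunch matrix of new columns, and
`Q_B R_B = (I − U Uᵀ) B`, then with `F = [S, UᵀB; 0, R_B]` the column-augmented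
matrix factorizes as `[Y B] = [U Q_B] · F · blockdiag(V, I_b)ᵀ`. -/
theorem isvd_column_update_factorization
    {n m b N : ℕ}
    (Y : Matrix (Fin n) (Fin m) ℝ)
    (U : Matrix (Fin n) (Fin N) ℝ)
    (S : Matrix (Fin N) (Fin N) ℝ)
    (V : Matrix (Fin m) (Fin N) ℝ)
    (hY : Y = U * S * Vᵀ)
    (B : Matrix (Fin n) (Fin b) ℝ)
    (QB : Matrix (Fin n) (Fin b) ℝ) (RB : Matrix (Fin b) (Fin b) ℝ)
    (hQR : QB * RB = (1 - U * Uᵀ) * B) :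
    Matrix.fromCols Y B =
      Matrix.fromCols U QB
        * Matrix.fromBlocks S (Uᵀ * B) 0 RB
        * (Matrix.fromBlocks V 0 0 (1 : Matrix (Fin b) (Fin b) ℝ))ᵀ := by
  have hB : U * (Uᵀ * B) + QB * RB = B := by
    rw [← Matrix.mul_assoc]
    exact mul_add_eq_of_mul_eq_one_sub_mul _ _ _ _ hQR
  rw [fromCols_mul_fromBlocks_zero, hB, fromBlocks_transpose, transpose_zero, transpose_zero,
    transpose_one, fromCols_mul_fromBlocks_zero_one, hY]
end

section
/- Let Y = U S Vᵀ with U ∈ ℝ^{n×N}, V ∈ ℝ^{m×N} having orthonormal columns (UᵀU = I_N, VᵀV = I_N) and S ∈ ℝ^{N×N}. Let B ∈ ℝ^{n×b}, let Q_B R_B = (I_n − U Uᵀ)B be a QR decomposition with Q_Bᵀ Q_B = I_b and R_B ∈ ℝ^{b×b} invertible, and let F = [ S , UᵀB ; 0 , R_B ] = U' S' V'ᵀ be a singular value decomposition of the square matrix F ∈ ℝ^{(N+b)×(N+b)} with U'ᵀU' = I_{N+b} and V'ᵀV' = I_{N+b}. Define Ũ := [U Q_B] U', S̃ := S', Ṽ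 := blockdiag(V, I_b) V'. Then [Y B] = Ũ S̃ Ṽᵀ, ŨᵀŨ = I_{N+b}, and ṼᵀṼ = I_{N+b}; that is, (Ũ, S̃, Ṽ) is a singular value decomposition of the column-updated matrix [Y B]. -/
open Matrix

/-!
Since `R_B` is invertible, `Q_B = (I - U Uᵀ) B R_B⁻¹` lies in the orthogonal complement of the
column space of `U`, so `[U Q_B]` and `blockdiag(V, I)` have orthonormal columns, and so do their
products with `U'` and `V'`. The factorization follows from
`[U Q_B] F blockdiag(V, I)ᵀ = [U S Vᵀ, U Uᵀ B + Q_B R_B] = [Y, B]`.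
-/

namespace Matrix

variable {α : Type*} [CommRing α] {k l m n p : Type*}

theorem transpose_mul_self_mul [Fintype k] [Fintype l] [DecidableEq l] [DecidableEq m]
    {A : Matrix k l α} {C : Matrix l m α} (hA : Aᵀ * A = 1) (hC : Cᵀ * C = 1) :
    (A * C)ᵀ * (A * C) = 1 := by
  rw [transpose_mul, Matrix.mul_assoc, ← Matrix.mul_assoc Aᵀ, hA, Matrix.one_mul, hC]

theorem transpose_mul_eq_zero_of_mul_eq_one_sub_mul_transpose_mul [Fintype k] [Fintype l]
    [Fintype m] [DecidableEq k] [DecidableEq l] [DecidableEq m] {U : Matrix k l α}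
    {Q B : Matrix k m α} {R : Matrix m m α} (hU : Uᵀ * U = 1) (hQR : Q * R = (1 - U * Uᵀ) * B)
    (hR : IsUnit R) : Uᵀ * Q = 0 := by
  have hUQR : Uᵀ * Q * R = 0 := by
    rw [Matrix.mul_assoc, hQR, ← Matrix.mul_assoc, Matrix.mul_sub, Matrix.mul_one,
      ← Matrix.mul_assoc, hU, Matrix.one_mul, sub_self, Matrix.zero_mul]
  rw [← mul_nonsing_inv_cancel_right R (Uᵀ * Q) ((isUnit_iff_isUnit_det R).mp hR), hUQR,
    Matrix.zero_mul]

theorem transpose_mul_self_fromCols [Fintype k] [DecidableEq l] [DecidableEq p]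
    {U : Matrix k l α} {Q : Matrix k p α} (hU : Uᵀ * U = 1) (hQ : Qᵀ * Q = 1)
    (hUQ : Uᵀ * Q = 0) : (fromCols U Q)ᵀ * fromCols U Q = 1 := by
  have hQU : Qᵀ * U = 0 := by
    rw [← transpose_transpose (Qᵀ * U), transpose_mul, transpose_transpose, hUQ, transpose_zero]
  rw [transpose_fromCols, fromRows_mul_fromCols, hU, hQ, hUQ, hQU, fromBlocks_one]

theorem transpose_mul_self_fromBlocks_one [Fintype k] [Fintype p] [DecidableEq l]
    [DecidableEq p] {V : Matrix k l α} (hV : Vᵀ * V = 1) :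
    (fromBlocks V 0 0 (1 : Matrix p p α))ᵀ * fromBlocks V 0 0 (1 : Matrix p p α) = 1 := by
  rw [fromBlocks_transpose, fromBlocks_multiply]
  simp [hV, ← fromBlocks_one]

theorem fromCols_mul_eq_fromCols_mul_fromBlocks_mul [Fintype k] [Fintype l] [Fintype m]
    [DecidableEq m] (U : Matrix k l α) (S : Matrix l l α) (V : Matrix n l α)
    {Q B : Matrix k m α} (R : Matrix m m α) (hB : U * (Uᵀ * B) + Q * R = B) :
    fromCols (U * S * Vᵀ) B =
      fromCols U Q * fromBlocks S (Uᵀ * B) 0 R * (fromBlocks V 0 0 (1 : Matrix m m α))ᵀ := by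
  rw [fromCols_mul_fromBlocks, fromBlocks_transpose, transpose_zero, transpose_zero,
    transpose_one, fromCols_mul_fromBlocks, hB]
  simp [Matrix.mul_assoc]

end Matrix

/-- **Correctness of the additive rank-b column update of the SVD (Brand).**
Given an SVD `Y = U S Vᵀ` with orthonormal columns, a bunch matrix `B`, a QR
decomposition `Q_B R_B = (I − U Uᵀ) B` with `Q_B` orthonormal and `R_B`
invertible, and an SVD `F = U' S' V'ᵀ` of `F = [S, UᵀB; 0, R_B]`, the triple
`Ũ := [U Q_B] U'`, `S̃ := S'`, `Ṽ := blockdiag(V, I_b) V'` is an SVD of the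
column-updated matrix `[Y B]`. -/
theorem isvd_column_update_is_svd
    {n m b N : ℕ}
    (Y : Matrix (Fin n) (Fin m) ℝ)
    (U : Matrix (Fin n) (Fin N) ℝ)
    (S : Matrix (Fin N) (Fin N) ℝ)
    (V : Matrix (Fin m) (Fin N) ℝ)
    (hU : Uᵀ * U = 1) (hV : Vᵀ * V = 1)
    (hY : Y = U * S * Vᵀ)
    (B : Matrix (Fin n) (Fin b) ℝ)
    (QB : Matrix (Fin n) (Fin b) ℝ) (RB : Matrix (Fin b) (Fin b) ℝ)
    (hQR : QB * RB = (1 - U * Uᵀ) * B)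
    (hQB : QBᵀ * QB = 1) (hRB : IsUnit RB)
    (U' S' V' : Matrix (Fin N ⊕ Fin b) (Fin N ⊕ Fin b) ℝ)
    (hF : Matrix.fromBlocks S (Uᵀ * B) 0 RB = U' * S' * V'ᵀ)
    (hU' : U'ᵀ * U' = 1) (hV' : V'ᵀ * V' = 1) :
    Matrix.fromCols Y B =
        (Matrix.fromCols U QB * U') * S'
          * ((Matrix.fromBlocks V 0 0 (1 : Matrix (Fin b) (Fin b) ℝ)) * V')ᵀ ∧
      (Matrix.fromCols U QB * U')ᵀ * (Matrix.fromCols U QB * U') = 1 ∧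
      ((Matrix.fromBlocks V 0 0 (1 : Matrix (Fin b) (Fin b) ℝ)) * V')ᵀ
          * ((Matrix.fromBlocks V 0 0 (1 : Matrix (Fin b) (Fin b) ℝ)) * V') = 1 := by
  have hUQ := transpose_mul_eq_zero_of_mul_eq_one_sub_mul_transpose_mul hU hQR hRB
  have hB : U * (Uᵀ * B) + QB * RB = B := by
    rw [hQR, Matrix.sub_mul, Matrix.one_mul, ← Matrix.mul_assoc, add_sub_cancel]
  refine ⟨?_, transpose_mul_self_mul (transpose_mul_self_fromCols hU hQB hUQ) hU',
    transpose_mul_self_mul (transpose_mul_self_fromBlocks_one hV) hV'⟩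
  rw [hY, fromCols_mul_eq_fromCols_mul_fromBlocks_mul U S V RB hB, hF]
  simp only [transpose_mul, Matrix.mul_assoc]
end
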